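/- arXiv:1304.4091 — 5 statements merged into one kernel-verified Lean document; each statement's English description precedes it below -/
import Mathlib

section
/- Convergence bound for the product of positive real-number representations: let r and s be nested-interval representations of real numbers such that r⁻ k > 0 and s⁻ k > 0 for all k. Then for every natural number l, r⁺ l · s⁺ l − r⁻ l · s⁻ l ≤ (r⁺ l + s⁻ l) · 2^(−l). Consequently, if l is chosen so that (r⁺ l + s⁻ l) · 2^(−l) ≤ 2^(−k), the interval [r⁻ l · s⁻ l, r⁺ l · s⁺ l] has length at most 2^(−k). -/
def IsNestedIntervalRep (lo hi : ℕ → ℚ) : Prop :=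
  ∀ k : ℕ, lo k ≤ hi k ∧ lo k ≤ lo (k + 1) ∧ hi (k + 1) ≤ hi k ∧
    hi k - lo k ≤ (2 : ℚ) ^ (-(k : ℤ))

theorem mul_convergence_bound (rlo rhi slo shi : ℕ → ℚ)
    (hr : IsNestedIntervalRep rlo rhi) (hs : IsNestedIntervalRep slo shi)
    (hrpos : ∀ k, 0 < rlo k) (hspos : ∀ k, 0 < slo k) :
    (∀ l : ℕ, rhi l * shi l - rlo l * slo l ≤ (rhi l + slo l) * (2 : ℚ) ^ (-(l : ℤ))) ∧
    (∀ k l : ℕ, (rhi l + slo l) * (2 : ℚ) ^ (-(l : ℤ)) ≤ (2 : ℚ) ^ (-(k : ℤ)) →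
      rhi l * shi l - rlo l * slo l ≤ (2 : ℚ) ^ (-(k : ℤ))) := by
  have main : ∀ l : ℕ, rhi l * shi l - rlo l * slo l ≤ (rhi l + slo l) * (2 : ℚ) ^ (-(l : ℤ)) := by
    intro l
    obtain ⟨hr1, -, -, hr4⟩ := hr l
    obtain ⟨hs1, -, -, hs4⟩ := hs l
    have h1 := hrpos l
    have h2 := hspos l
    nlinarith [mul_le_mul_of_nonneg_left hs4 (le_trans h1.le hr1),
      mul_le_mul_of_nonneg_left hr4 h2.le]
  exact ⟨main, fun k l h => le_trans (main l) h⟩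
end

section
/- Three Points Lemma: let P, Q₀, Q₁, Q₂ be four points in the real plane ℝ² such that for every i ∈ {0, 1, 2}, the point Q_{i+1 mod 3} is to the left of the oriented line P Q_i, i.e., left(P, Q_i, Q_{(i+1) mod 3}) holds. Then at least one of Q₀, Q₁, Q₂ lies strictly below P, i.e., there exists i ∈ {0, 1, 2} with y-coordinate of Q_i strictly less than the y-coordinate of P. -/
/-- `leftOf P Q R` holds iff `R` is to the left of the oriented line `P Q`. -/
def leftOf (P Q R : ℝ × ℝ) : Prop :=
  (Q.1 - P.1) * (R.2 - P.2) - (R.1 - P.1) * (Q.2 - P.2) > 0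

/-- Three Points Lemma. -/
theorem three_points (P : ℝ × ℝ) (Q : Fin 3 → ℝ × ℝ)
    (h : ∀ i : Fin 3, leftOf P (Q i) (Q (i + 1))) :
    ∃ i : Fin 3, (Q i).2 < P.2 := by
  by_contra hc
  push_neg at hc
  have h0 := h 0
  have h1 := h 1
  have h2 := h 2
  have g0 := hc 0
  have g1 := hc 1
  have g2 := hc 2
  simp only [leftOf, show (0 : Fin 3) + 1 = 1  
from rfl,
    show (1 : Fin 3) + 1 = 2 from rfl, show (2 : Fin 3) + 1 = 0 from rfl] at h0 h1 h2
  set c0 := ((Q 0).1 - P.1) * ((Q 1).2 - P.2) - ((Q 1).1 - P.1) * ((Q 0).2 - P.2) with hc0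
  set c1 := ((Q 1).1 - P.1) * ((Q 2).2 - P.2) - ((Q 2).1 - P.1) * ((Q 1).2 - P.2) with hc1
  set c2 := ((Q 2).1 - P.1) * ((Q 0).2 - P.2) - ((Q 0).1 - P.1) * ((Q 2).2 - P.2) with hc2
  have key : ((Q 2).2 - P.2) * c0 + ((Q 0).2 - P.2) * c1 + ((Q 1).2 - P.2) * c2 = 0 := by
    rw [hc0, hc1, hc2]; ring
  have t0 : ((Q 2).2 - P.2) * c0 ≥ 0 := mul_nonneg (by linarith) h0.le
  have t1 : ((Q 0).2 - P.2) * c1 ≥ 0 := mul_nonneg (by linarith) h1.le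
  have t2 : ((Q 1).2 - P.2) * c2 ≥ 0 := mul_nonneg (by linarith) h2.le
  have e0 : (Q 2).2 - P.2 = 0 := by
    by_contra hne
    have : (Q 2).2 - P.2 > 0 := lt_of_le_of_ne (by linarith) (Ne.symm hne)
    nlinarith [mul_pos this h0]
  have e1 : (Q 0).2 - P.2 = 0 := by
    by_contra hne
    have : (Q 0).2 - P.2 > 0 := lt_of_le_of_ne (by linarith) (Ne.symm hne)
    nlinarith [mul_pos this h1]
  have e2 : (Q 1).2 - P.2 = 0 := by
    by_contra hne
    have : (Q 1).2 - P.2 > 0 := lt_of_le_of_ne (by linarith) (Ne.symm hne)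
    nlinarith [mul_pos this h2]
  rw [hc0, e1, e2] at h0
  nlinarith [h0]
end

section
/- Algebraic core of the Three Points Lemma (origin-centered case): let x₀, y₀, x₁, y₁, x₂, y₂ be real numbers satisfying the cyclic conditions x₀·y₁ − x₁·y₀ > 0, x₁·y₂ − x₂·y₁ > 0, and x₂·y₀ − x₀·y₂ > 0. If y₀ > 0 and y₂ > 0, then y₁ < 0. -/
theorem three_points_algebraic_core (x0 y0 x1 y1 x2 y2 : ℝ)
    (h01 : x0 * y1 - x1 * y0 > 0)
    (h12 : x1 * y2 - x2 * y1 > 0)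
    (h20 : x2 * y0 - x0 * y2 > 0)
    (hy0 : y0 > 0) (hy2 : y2 > 0) :
    y1 < 0 := by
  nlinarith [mul_pos hy2 h01, mul_pos hy0 h12, mul_pos h20 hy0, mul_pos h20 hy2]
end

section
/- Three Points Lemma, rational-interval version: for i ∈ {0, 1, 2} let x⁻_i ≤ x⁺_i and y⁻_i ≤ y⁺_i be rational numbers, and suppose that for every i ∈ {0, 1, 2} (indices modulo 3) and all rationals q_i ∈ [x⁻_i, x⁺_i], p_i ∈ [y⁻_i, y⁺_i], q_{i+1} ∈ [x⁻_{i+1}, x⁺_{i+1}], p_{i+1} ∈ [y⁻_{i+1}, y⁺_{i+1}], one has q_i·p_{i+1} − q_{i+1}·p_i > 0. Then there exists i ∈ {0, 1, 2} such that the interval [y⁻_i, y⁺_i] is entirely negative, i.e., y⁺_i < 0. -/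
/-- Three Points Lemma, rational-interval version. -/
theorem three_points_rational_intervals
    (xlo xhi ylo yhi : Fin 3 → ℚ)
    (hx : ∀ i, xlo i ≤ xhi i) (hy : ∀ i, ylo i ≤ yhi i)
    (h : ∀ i : Fin 3, ∀ q p q' p' : ℚ,
      xlo i ≤ q → q ≤ xhi i → ylo i ≤ p → p ≤ yhi i →
      xlo (i + 1) ≤ q' → q' ≤ xhi (i + 1) → ylo (i + 1) ≤ p' → p' ≤ yhi (i + 1) →
      q * p' - q' * p > 0) :
    ∃ i : Fin 3, yhi i < 0 := by
  by_contra hc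
  push_neg at hc
  have A := h 0 (xhi 0) (yhi 0) (xhi (0+1)) (yhi (0+1)) (hx 0) le_rfl (hy 0) le_rfl
    (hx (0+1)) le_rfl (hy (0+1)) le_rfl
  have B := h 1 (xhi 1) (yhi 1) (xhi (1+1)) (yhi (1+1)) (hx 1) le_rfl (hy 1) le_rfl
    (hx (1+1)) le_rfl (hy (1+1)) le_rfl
  have C := h 2 (xhi 2) (yhi 2) (xhi (2+1)) (yhi (2+1)) (hx 2) le_rfl (hy 2) le_rfl
    (hx (2+1)) le_rfl (hy (2+1)) le_rfl
  have e1 : (0+1 : Fin 3) = 1 := rfl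
  have e2 : (1+1 : Fin 3) = 2 := rfl
  have e3 : (2+1 : Fin 3) = 0 := rfl
  rw [e1] at A
  rw [e2] at B
  rw [e3] at C
  rcases (hc 0).lt_or_eq with h0 | h0 <;>
  rcases (hc 1).lt_or_eq with h1 | h1 <;>
  rcases (hc 2).lt_or_eq with h2 | h2 <;>
  first
  | nlinarith [mul_eq_zero_of_right (xhi 0) h1.symm, mul_eq_zero_of_right (xhi 1) h0.symm, A]
  | nlinarith [A, B, C, hc 0, hc 1, hc 2,
    mul_nonneg A.le (hc 2), mul_nonneg B.le (hc 0), mul_nonneg C.le (hc 1),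
    mul_nonneg A.le (hc 0), mul_nonneg B.le (hc 1), mul_nonneg C.le (hc 2),
    mul_nonneg A.le (hc 1), mul_nonneg B.le (hc 2), mul_nonneg C.le (hc 0)]
end

section
/- Convex Angle Theorem: let n ≥ 2 and let a₀, …, aₙ be points in the real plane ℝ² such that no three of them are on the same line, in the sense that for all pairwise distinct indices p, q, r ≤ n, either left(a_p, a_q, a_r) or right(a_p, a_q, a_r) holds. Then there exist pairwise distinct indices i, j, k ≤ n such that every other point falls in the angle ∠(a_j, a_i, a_k): for every index l ≤ n with l ≠ i, if l ≠ j then left(a_i, a_j, a_l) holds, and if l ≠ k then right(a_i, a_k, a_l) holds. -/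
/-- `rightOf P Q R` holds iff `R` is to the right of the oriented line `P Q`. -/
def rightOf (P Q R : ℝ × ℝ) : Prop :=
  (Q.1 - P.1) * (R.2 - P.2) - (R.1 - P.1) * (Q.2 - P.2) < 0

/-!
Let `a i` be the lexicographically smallest point. Every other point then lies in the half-plane
where the argument of `a l - a i` ranges over `(-π/2, π/2]`, and on that half-plane
`leftOf (a i) (a l) (a m)` says exactly that `a l - a i` has smaller argument than `a m - a i`.
The points of smallest and largest argument are the `j` and `k` of the theorem.
-/

open Real

lemma rightOf_iff_leftOf_swap {P Q R : ℝ × ℝ} : rightOf P Q R ↔ leftOf P R Q := by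
  unfold leftOf rightOf
  constructor <;> intro h <;> linarith

lemma ne_of_leftOf_or_rightOf {P Q R : ℝ × ℝ} (h : leftOf P Q R ∨ rightOf P Q R) :
    Q ≠ P := by
  rintro rfl
  simp [leftOf, rightOf] at h

/-- The argument of `w`, in `(-π/2, π/2]`, provided `toLex 0 < toLex w`. -/
noncomputable def halfPlaneArg (w : ℝ × ℝ) : ℝ :=
  if w.1 = 0 then π / 2 else arctan (w.2 / w.1)

lemma halfPlaneArg_lt_of_leftOf {O P Q : ℝ × ℝ} (hP : toLex O < toLex P)
    (hQ : toLex O < toLex Q) (h : leftOf O P Q) :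
    halfPlaneArg (P - O) < halfPlaneArg (Q - O) := by
  unfold leftOf at h
  rw [Prod.Lex.toLex_lt_toLex] at hP hQ
  simp only [halfPlaneArg, Prod.fst_sub, Prod.snd_sub, sub_eq_zero]
  rcases hP with hP | ⟨hP, hP'⟩ <;> rcases hQ with hQ | ⟨hQ, hQ'⟩
  · rw [if_neg hP.ne', if_neg hQ.ne', arctan_lt_arctan_iff,
      div_lt_div_iff₀ (by linarith) (by linarith)]
    nlinarith
  · rw [if_neg hP.ne', if_pos hQ.symm]
    exact arctan_lt_pi_div_two _
  · rw [hP] at h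
    nlinarith
  · rw [← hP, ← hQ] at h
    simp at h

lemma leftOf_iff_halfPlaneArg_lt {O P Q : ℝ × ℝ} (hP : toLex O < toLex P)
    (hQ : toLex O < toLex Q) (hOPQ : leftOf O P Q ∨ rightOf O P Q) :
    leftOf O P Q ↔ halfPlaneArg (P - O) < halfPlaneArg (Q - O) := by
  refine ⟨halfPlaneArg_lt_of_leftOf hP hQ, fun hlt => hOPQ.resolve_right fun h => ?_⟩
  exact hlt.not_gt (halfPlaneArg_lt_of_leftOf hQ hP (rightOf_iff_leftOf_swap.mp h))

theorem exists_extreme_rays {ι : Type*} {s : Finset ι} (hs : 1 < s.card) {O : ℝ × ℝ}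
    {a : ι → ℝ × ℝ} (hO : ∀ l ∈ s, toLex O < toLex (a l))
    (hgen : ∀ l ∈ s, ∀ m ∈ s, l ≠ m → leftOf O (a l) (a m) ∨ rightOf O (a l) (a m)) :
    ∃ j ∈ s, ∃ k ∈ s, j ≠ k ∧ ∀ l ∈ s,
      (l ≠ j → leftOf O (a j) (a l)) ∧ (l ≠ k → rightOf O (a k) (a l)) := by
  set θ : ι → ℝ := fun l => halfPlaneArg (a l - O)
  have hleft : ∀ l ∈ s, ∀ m ∈ s, l ≠ m → (leftOf O (a l) (a m) ↔ θ l < θ m) :=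
    fun l hl m hm hlm => leftOf_iff_halfPlaneArg_lt (hO l hl) (hO m hm) (hgen l hl m hm hlm)
  have hθ : Set.InjOn θ s := by
    intro l hl m hm hlm
    by_contra hne
    rcases hgen l hl m hm hne with h | h
    · exact ((hleft l hl m hm hne).mp h).ne hlm
    · exact ((hleft m hm l hl (Ne.symm hne)).mp (rightOf_iff_leftOf_swap.mp h)).ne' hlm
  have hne : s.Nonempty := Finset.card_pos.mp (by omega)
  obtain ⟨j, hj, hjmin⟩ := s.exists_min_image θ hne
  obtain ⟨k, hk, hkmax⟩ := s.exists_max_image θ hne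
  refine ⟨j, hj, k, hk, ?_, fun l hl => ⟨fun hlj => ?_, fun hlk => ?_⟩⟩
  · rintro rfl
    obtain ⟨p, hp, q, hq, hpq⟩ := Finset.one_lt_card.mp hs
    exact hpq (hθ hp hq ((hkmax p hp).antisymm (hjmin p hp) |>.trans
      ((hkmax q hq).antisymm (hjmin q hq)).symm))
  · exact (hleft j hj l hl (Ne.symm hlj)).mpr
      ((hjmin l hl).lt_of_ne fun h => hlj (hθ hl hj h.symm))
  · exact rightOf_iff_leftOf_swap.mpr <| (hleft l hl k hk hlk).mpr
      ((hkmax l hl).lt_of_ne fun h => hlk (hθ hl hk h))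

/-- Convex Angle Theorem. -/
theorem convex_angle (n : ℕ) (hn : 2 ≤ n) (a : ℕ → ℝ × ℝ)
    (hgen : ∀ p ≤ n, ∀ q ≤ n, ∀ r ≤ n, p ≠ q → q ≠ r → p ≠ r →
      leftOf (a p) (a q) (a r) ∨ rightOf (a p) (a q) (a r)) :
    ∃ i ≤ n, ∃ j ≤ n, ∃ k ≤ n, i ≠ j ∧ j ≠ k ∧ i ≠ k ∧
      ∀ l ≤ n, l ≠ i →
        (l ≠ j → leftOf (a i) (a j) (a l)) ∧
        (l ≠ k → rightOf (a i) (a k) (a l)) := by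
  obtain ⟨i, hi, hmin⟩ := (Finset.range (n + 1)).exists_min_image (toLex ∘ a) ⟨0, by simp⟩
  rw [Finset.mem_range, Nat.lt_succ_iff] at hi
  set s := (Finset.range (n + 1)).erase i
  have hs : ∀ l, l ∈ s ↔ l ≤ n ∧ l ≠ i := by simp [s, and_comm]
  have hcard : 1 < s.card := by
    rw [Finset.card_erase_of_mem (Finset.mem_range.mpr (by omega)), Finset.card_range]
    omega
  have hdistinct : ∀ l ≤ n, l ≠ i → a l ≠ a i := by
    intro l hl hli
    obtain ⟨r, hr, hri, hrl⟩ : ∃ r ≤ 2, r ≠ i ∧ r ≠ l :=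
      ⟨if i ≠ 0 ∧ l ≠ 0 then 0 else if i ≠ 1 ∧ l ≠ 1 then 1 else 2, by split_ifs <;> omega⟩
    exact ne_of_leftOf_or_rightOf
      (hgen i hi l hl r (hr.trans hn) (Ne.symm hli) hrl.symm (Ne.symm hri))
  have hO : ∀ l ∈ s, toLex (a i) < toLex (a l) := by
    intro l hl
    obtain ⟨hln, hli⟩ := (hs l).mp hl
    exact (hmin l (Finset.mem_range.mpr (by omega))).lt_of_ne
      fun h => hdistinct l hln hli (toLex.injective h).symm
  obtain ⟨j, hj, k, hk, hjk, hext⟩ := exists_extreme_rays hcard hO fun l hl m hm hlm => by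
    rw [hs] at hl hm
    exact hgen i hi l hl.1 m hm.1 (Ne.symm hl.2) hlm (Ne.symm hm.2)
  obtain ⟨hjn, hji⟩ := (hs j).mp hj
  obtain ⟨hkn, hki⟩ := (hs k).mp hk
  exact ⟨i, hi, j, hjn, k, hkn, Ne.symm hji, hjk, Ne.symm hki,
    fun l hl hli => hext l ((hs l).mpr ⟨hl, hli⟩)⟩
end
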